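/- arXiv:1305.6395 — 8 statements merged into one kernel-verified Lean document; each statement's English description precedes it below -/
import Mathlib

section
/- Any word whose exponent is at least 2 is closed. That is, if w = v^n v' where n ≥ 2, v is a primitive nonempty word, and v' is a proper prefix of v, then w has a border (a proper factor that is both a prefix and a suffix) with no internal occurrence in w. -/
/-!
Write `w = v ++ u` with `u = v^(n-1) v'`; then `u` is a border of `w`, and it starts with `v`
because `n ≥ 2`. An internal occurrence `w = a ++ u ++ b` would make `a ++ v` a prefix of
`v ++ v` with `0 < |a| < |v|`, i.e. `v = a ++ c` with `a ++ c = c ++ a`. Commuting words are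
powers of a common word (Lyndon–Schützenberger), so `v` would not be primitive.
-/

variable {α : Type*}

/-- `u` is a factor (contiguous subword) of `w`. -/
def IsFactor (u w : List α) : Prop := ∃ v z : List α, w = v ++ u ++ z

/-- `u` is a border of `w`: a word different from `w` that is both a prefix and a suffix. -/
def IsBorder (u w : List α) : Prop := u ≠ w ∧ u <+: w ∧ u <:+ w

/-- `u` has an internal occurrence in `w`. -/
def HasInternalOcc (u w : List α) : Prop :=
  ∃ v z : List α, v ≠ [] ∧ z ≠ [] ∧ w = v ++ u ++ z

/-- A word is closed if it is empty or has a border with no internal occurrence. -/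
def ClosedWord (w : List α) : Prop :=
  w = [] ∨ ∃ u : List α, IsBorder u w ∧ ¬ HasInternalOcc u w

/-- The set of closed factors of `w`. -/
def closedFactors (w : List α) : Set (List α) := {u | IsFactor u w ∧ ClosedWord u}

/-- A word is CR-poor if it has exactly `|w| + 1` closed factors. -/
def IsCRPoor (w : List α) : Prop := (closedFactors w).ncard = w.length + 1

/-- `w` is a complete return to `u`: exactly two occurrences of `u` in `w`,
one as a prefix and one as a suffix. -/
def IsCompleteReturn (u w : List α) : Prop :=
  u <+: w ∧ u <:+ w ∧ {i : ℕ | i + u.length ≤ w.length ∧ u <+: w.drop i}.ncard = 2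

/-- The set of palindromic factors of `w`. -/
def palFactors (w : List α) : Set (List α) := {u | IsFactor u w ∧ u.reverse = u}

/-- `k`-fold concatenation power of a word. -/
def listPow (u : List α) : ℕ → List α
  | 0 => []
  | k + 1 => u ++ listPow u k

/-- A word is primitive if it is nonempty and not a power `u^k` with `k ≥ 2`. -/
def Primitive (v : List α) : Prop :=
  v ≠ [] ∧ ∀ (u : List α) (k : ℕ), 2 ≤ k → v ≠ listPow u k

/-- `p` is a period of `w`. -/
def HasPeriod (w : List α) (p : ℕ) : Prop := 0 < p ∧ p ≤ w.length ∧ w.drop p <+: w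

open List

theorem listPow_add (u : List α) (k l : ℕ) :
    listPow u (k + l) = listPow u k ++ listPow u l := by
  induction k with
  | zero => simp [listPow]
  | succ k ih => simp [Nat.succ_add, listPow, ih]

theorem listPow_succ' (u : List α) (k : ℕ) : listPow u (k + 1) = listPow u k ++ u := by
  rw [listPow_add]; simp [listPow]

theorem exists_eq_listPow_of_append_comm {x y : List α} (h : x ++ y = y ++ x) :
    ∃ u k l, x = listPow u k ∧ y = listPow u l := by
  rcases eq_or_ne x [] with rfl | hx
  · exact ⟨y, 0, 1, rfl, (append_nil y).symm⟩
  rcases eq_or_ne y [] with rfl | hy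
  · exact ⟨x, 1, 0, (append_nil x).symm, rfl⟩
  rcases le_total x.length y.length with hle | hle
  · obtain ⟨z, rfl⟩ : x <+: y :=
      prefix_of_prefix_length_le (h ▸ prefix_append x y) (prefix_append y x) hle
    have hz : x ++ z = z ++ x := by simpa using h
    have : x.length + z.length < x.length + (x ++ z).length := by
      simp [length_pos_iff.mpr hx]
    obtain ⟨u, k, l, rfl, rfl⟩ := exists_eq_listPow_of_append_comm hz
    exact ⟨u, k, k + l, rfl, (listPow_add u k l).symm⟩
  · obtain ⟨z, rfl⟩ : y <+: x :=
      prefix_of_prefix_length_le (h ▸ prefix_append y x) (prefix_append x y) hle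
    have hz : y ++ z = z ++ y := by simpa using h.symm
    have : y.length + z.length < (y ++ z).length + y.length := by
      simp [length_pos_iff.mpr hy]
    obtain ⟨u, k, l, rfl, rfl⟩ := exists_eq_listPow_of_append_comm hz
    exact ⟨u, k + l, k, (listPow_add u k l).symm, rfl⟩
termination_by x.length + y.length

theorem Primitive.append_ne_append_swap {a c : List α} (hv : Primitive (a ++ c))
    (ha : a ≠ []) (hc : c ≠ []) : a ++ c ≠ c ++ a := by
  intro h
  obtain ⟨u, k, l, rfl, rfl⟩ := exists_eq_listPow_of_append_comm h
  have hk : k ≠ 0 := by rintro rfl; exact ha rfl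
  have hl : l ≠ 0 := by rintro rfl; exact hc rfl
  exact hv.2 u (k + l) (by omega) (listPow_add u k l).symm

theorem Primitive.eq_nil_of_append_prefix_append_self {v a : List α} (hv : Primitive v)
    (h : a ++ v <+: v ++ v) (hlt : a.length < v.length) : a = [] := by
  by_contra ha
  obtain ⟨c, rfl⟩ : a <+: v :=
    prefix_of_prefix_length_le ((prefix_append a v).trans h) (prefix_append v v) hlt.le
  have hc : c ≠ [] := by rintro rfl; simp at hlt
  have h' : a ++ c <+: c ++ a ++ c := by simpa using h
  have hcomm : a ++ c = c ++ a :=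
    (prefix_of_prefix_length_le h' (prefix_append _ c) (by simp [Nat.add_comm])).eq_of_length
      (by simp [Nat.add_comm])
  exact hv.append_ne_append_swap ha hc hcomm

theorem Primitive.not_hasInternalOcc_append {v u : List α} (hv : Primitive v) (hu : v <+: u) :
    ¬ HasInternalOcc u (v ++ u) := by
  rintro ⟨a, b, ha, hb, h⟩
  have hlen : a.length + b.length = v.length := by
    have := congrArg length h
    simp only [length_append] at this
    omega
  have hav : a ++ v <+: v ++ u :=
    ((prefix_append_right_inj a).mpr hu).trans (h ▸ prefix_append (a ++ u) b)
  have hvv : v ++ v <+: v ++ u := (prefix_append_right_inj v).mpr hu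
  refine ha (hv.eq_nil_of_append_prefix_append_self
    (prefix_of_prefix_length_le hav hvv ?_) ?_)
  · simp only [length_append]; omega
  · have := length_pos_iff.mpr hb; omega

theorem stmt_0_general {α : Type*} (v v' : List α) (n : ℕ) (hn : 2 ≤ n)
    (hv : Primitive v) (hpref : v' <+: v) :
    ∃ u : List α, IsBorder u (listPow v n ++ v') ∧ ¬ HasInternalOcc u (listPow v n ++ v') := by
  obtain ⟨m, rfl⟩ : ∃ m, n = m + 2 := ⟨n - 2, by omega⟩
  have hw : listPow v (m + 2) ++ v' = v ++ (listPow v (m + 1) ++ v') := append_assoc _ _ _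
  refine ⟨listPow v (m + 1) ++ v', ⟨?_, ?_, hw ▸ suffix_append _ _⟩, hw ▸ ?_⟩
  · intro h
    have := congrArg length (h.trans hw)
    simp only [length_append] at this
    exact hv.1 (length_eq_zero_iff.mp (by omega))
  · rw [listPow_succ' v (m + 1), append_assoc]
    exact (prefix_append_right_inj _).mpr (hpref.trans (prefix_append v v'))
  · exact hv.not_hasInternalOcc_append (by simp [listPow, append_assoc])

/-- Any word whose exponent is at least 2 is closed: if w = v^n v' with n ≥ 2,
v primitive, v' a proper prefix of v, then w has a border with no internal occurrence. -/
theorem stmt_0 {α : Type*} (v v' : List α) (n : ℕ) (hn : 2 ≤ n)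
    (hv : Primitive v) (hpref : v' <+: v) (hne : v' ≠ v) :
    ∃ u : List α, IsBorder u (listPow v n ++ v') ∧ ¬ HasInternalOcc u (listPow v n ++ v') :=
  stmt_0_general v v' n hn hv hpref
end

section
/- The language of closed words over an alphabet with at least two letters is not regular. -/
variable {α : Type*}

/-!
For `a ≠ b`, the word `aᵐ b aⁿ` is closed exactly when `m = n`. The word `aⁿ b aⁿ` has the
border `aⁿ`, and an internal occurrence of `aⁿ` would have to cover the middle `b`. If `m < n`,
a border containing `b` has its `b` at position `m` both as a prefix and as a suffix, so it is the
whole word; a border `aᵏ` with `k ≤ m` occurs again right after the `b`. Hence the left quotients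
of the language of closed words by the words `aᵐ` are pairwise distinct, and by Myhill–Nerode the
language is not regular.
-/

theorem Language.not_isRegular_of_fooling_seq {L : Language α} (x y : ℕ → List α)
    (hdiag : ∀ n, x n ++ y n ∈ L) (hlt : ∀ m n, m < n → x m ++ y n ∉ L) : ¬ L.IsRegular := by
  intro hL
  obtain ⟨m, n, hmn, hxy⟩ := hL.finite_range_leftQuotient.exists_lt_map_eq_of_forall_mem
    (f := L.leftQuotient ∘ x) fun n ↦ Set.mem_range_self (x n)
  have hn : y n ∈ (L.leftQuotient ∘ x) n := hdiag n
  rw [← hxy] at hn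
  exact hlt m n hmn hn

section

variable {a b : α}

theorem getElem_replicate_append_cons_replicate_eq_iff (hab : a ≠ b) {m n i : ℕ}
    (hi : i < (List.replicate m a ++ b :: List.replicate n a).length) :
    (List.replicate m a ++ b :: List.replicate n a)[i] = b ↔ i = m := by
  simp only [List.getElem_append, List.getElem_cons, List.getElem_replicate, List.length_replicate]
  split_ifs <;> grind

theorem getElem_append_replicate_append {v z : List α} {k i : ℕ} (h₁ : v.length ≤ i)
    (h₂ : i < v.length + k) : (v ++ List.replicate k a ++ z)[i]'(by simp; omega) = a := by
  simp only [List.getElem_append, List.getElem_replicate, List.length_replicate,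
    List.length_append]
  split_ifs <;> grind

theorem closedWord_replicate_append_cons_replicate (hab : a ≠ b) (n : ℕ) :
    ClosedWord (List.replicate n a ++ b :: List.replicate n a) := by
  refine .inr ⟨List.replicate n a, ⟨fun h ↦ by simpa using congrArg List.length h,
    List.prefix_append _ _, (List.suffix_cons _ _).trans (List.suffix_append _ _)⟩, ?_⟩
  rintro ⟨v, z, hv, hz, hw⟩
  have hlen := congrArg List.length hw
  simp only [List.length_append, List.length_replicate, List.length_cons] at hlen
  have hv₁ := List.length_pos_iff.mpr hv
  have hz₁ := List.length_pos_iff.mpr hz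
  have hb : (List.replicate n a ++ b :: List.replicate n a)[n]'(by simp) = b :=
    (getElem_replicate_append_cons_replicate_eq_iff hab _).mpr rfl
  rw [List.getElem_of_eq hw, getElem_append_replicate_append (by omega) (by omega)] at hb
  exact hab hb

theorem not_closedWord_replicate_append_cons_replicate (hab : a ≠ b) {m n : ℕ} (hmn : m < n) :
    ¬ ClosedWord (List.replicate m a ++ b :: List.replicate n a) := by
  rintro (hnil | ⟨u, ⟨hne, hpre, hsuf⟩, hint⟩)
  · simp at hnil
  by_cases hu : u.length ≤ m
  · have hua : u = List.replicate u.length a := by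
      rw [List.prefix_iff_eq_take.mp hpre, List.take_append_of_le_length (by simpa using hu),
        List.take_replicate, min_eq_left hu, List.length_replicate]
    refine hint ⟨List.replicate m a ++ [b], List.replicate (n - u.length) a, by simp,
      by simp; omega, ?_⟩
    rw [hua, List.length_replicate, List.append_assoc, List.append_assoc, ← List.replicate_add,
      Nat.add_sub_cancel' (by omega)]
    simp
  · have hm : m < u.length := by omega
    have hb : u[m] = b :=
      (hpre.getElem hm).trans ((getElem_replicate_append_cons_replicate_eq_iff hab _).mpr rfl)
    have hoffset := (getElem_replicate_append_cons_replicate_eq_iff hab _).mp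
      ((hsuf.getElem hm).symm.trans hb)
    exact hne (hpre.eq_of_length (by have := hpre.length_le; omega))

end

/-- The language of closed words over an alphabet with at least two letters is not regular. -/
theorem stmt_3 {α : Type u} (a b : α) (hab : a ≠ b) :
    ¬ Language.IsRegular {w : List α | ClosedWord w} :=
  Language.not_isRegular_of_fooling_seq (fun n ↦ List.replicate n a)
    (fun n ↦ b :: List.replicate n a) (closedWord_replicate_append_cons_replicate hab)
    fun _ _ ↦ not_closedWord_replicate_append_cons_replicate hab
end

section
/- For any nonempty word w over Σ, there exists at most one letter x ∈ Σ such that wx is closed. -/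
variable {α : Type*}

/-!
A border of `w x` without internal occurrence cannot be empty, so it has the form `t x` with `t x`
a prefix and `t` a suffix of `w`. Given two such borders `t x` of `w x` and `t' y` of `w y` with
`|t| ≤ |t'|`, both are prefixes of `w`. If `|t| < |t'|`, then `t x` is a prefix of `t'`, and the
occurrence of `t'` as a proper suffix of `w` yields an internal occurrence of `t x` in `w x`.
Hence `|t| = |t'|`, so `t x = t' y` and `x = y`.
-/

lemma hasInternalOcc_nil_append_singleton {w : List α} (hw : w ≠ []) (x : α) :
    HasInternalOcc [] (w ++ [x]) :=
  ⟨w, [x], hw, List.cons_ne_nil x [], by simp⟩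

lemma hasInternalOcc_append_singleton_of_prefix_of_suffix {u v w : List α} (x : α)
    (huv : u <+: v) (hvw : v <:+ w) (hlen : v.length < w.length) :
    HasInternalOcc u (w ++ [x]) := by
  obtain ⟨b, rfl⟩ := huv
  obtain ⟨a, rfl⟩ := hvw
  refine ⟨a, b ++ [x], ?_, by simp, by simp⟩
  rintro rfl
  simp at hlen

lemma ClosedWord.exists_border_append_singleton {w : List α} {x : α} (hw : w ≠ [])
    (h : ClosedWord (w ++ [x])) :
    ∃ t, t ++ [x] <+: w ∧ t <:+ w ∧ ¬ HasInternalOcc (t ++ [x]) (w ++ [x]) := by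
  rcases h with h | ⟨u, ⟨hne, hpre, hsuf⟩, hocc⟩
  · simp at h
  obtain rfl | ⟨t, rfl, ht⟩ := List.suffix_concat_iff.1 hsuf
  · exact absurd (hasInternalOcc_nil_append_singleton hw x) hocc
  exact ⟨t, (List.prefix_concat_iff.1 hpre).resolve_left hne, ht, hocc⟩

lemma eq_of_border_append_singleton_of_length_le {w t t' : List α} {x y : α}
    (htw : t ++ [x] <+: w) (hocc : ¬ HasInternalOcc (t ++ [x]) (w ++ [x]))
    (ht'w : t' ++ [y] <+: w) (ht' : t' <:+ w) (hle : t.length ≤ t'.length) : x = y := by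
  rcases hle.lt_or_eq with hlt | heq
  · have hprefix : t ++ [x] <+: t' :=
      List.prefix_of_prefix_length_le htw ((List.prefix_append t' [y]).trans ht'w) (by simpa)
    have hlen : t'.length < w.length := by simpa using ht'w.length_le
    exact absurd (hasInternalOcc_append_singleton_of_prefix_of_suffix x hprefix ht' hlen) hocc
  · have heq' : t ++ [x] = t' ++ [y] :=
      (List.prefix_of_prefix_length_le htw ht'w (by simp [heq])).eq_of_length (by simp [heq])
    simpa using (List.append_inj' heq' rfl).2

/-- For any nonempty word w, there is at most one letter x such that wx is closed. -/
theorem stmt_4 {α : Type*} (w : List α) (hw : w ≠ []) (x y : α)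
    (hx : ClosedWord (w ++ [x])) (hy : ClosedWord (w ++ [y])) : x = y := by
  obtain ⟨t, htw, ht, hocc⟩ := hx.exists_border_append_singleton hw
  obtain ⟨t', ht'w, ht', hocc'⟩ := hy.exists_border_append_singleton hw
  rcases le_total t.length t'.length with hle | hle
  · exact eq_of_border_append_singleton_of_length_le htw hocc ht'w ht' hle
  · exact (eq_of_border_append_singleton_of_length_le ht'w hocc' htw ht hle).symm
end

section
/- Let w be a closed nonempty word and x a letter. Then wx is closed if and only if wx has the same smallest period as w. -/
/-!
Periods of `w` correspond to borders via `p ↦ w.drop p`. If `w = s ++ u` with `u` a border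
having no internal occurrence, the smallest period of `w` is `|s|`: a shorter period gives a
longer border, which has `u` as a suffix and hence contains an internal occurrence of `u`.
Periods of `wx` up to `|w|` are periods of `w`, so the smallest period cannot drop.
If `wx` is closed through a border `B`, then `B` is not a prefix of `u`, because `u` occurs
internally in `s u x`; so `|B| > |u|` and the period `|wx| - |B|` of `wx` is at most `|s|`.
Conversely, if `|s|` is still the smallest period of `wx`, then `ux` is a border of `wx`, and an
internal occurrence of `ux` in `wx` would give one of `u` in `w`.
-/

variable {α : Type*}

theorem hasPeriod_length {w : List α} (hw : w ≠ []) : HasPeriod w w.length :=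
  ⟨List.length_pos_iff.2 hw, le_rfl, by simp⟩

theorem IsBorder.hasPeriod_length_sub {u w : List α} (h : IsBorder u w) :
    HasPeriod w (w.length - u.length) := by
  obtain ⟨hne, hpre, s, rfl⟩ := h
  have hs : s ≠ [] := by rintro rfl; exact hne rfl
  have hlen : (s ++ u).length - u.length = s.length := by simp
  rw [hlen]
  exact ⟨List.length_pos_iff.2 hs, by simp, by simpa using hpre⟩

theorem HasPeriod.isBorder_drop {w : List α} {p : ℕ} (h : HasPeriod w p) :
    IsBorder (w.drop p) w := by
  obtain ⟨hp, hpw, hpre⟩ := h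
  refine ⟨fun heq => ?_, hpre, List.drop_suffix p w⟩
  have := congrArg List.length heq
  simp only [List.length_drop] at this
  omega

theorem HasPeriod.of_append {w z : List α} {q : ℕ} (h : HasPeriod (w ++ z) q)
    (hq : q ≤ w.length) : HasPeriod w q := by
  obtain ⟨hq0, -, hpre⟩ := h
  rw [List.drop_append_of_le_length hq] at hpre
  exact ⟨hq0, hq, List.prefix_of_prefix_length_le ((List.prefix_append _ z).trans hpre)
    (List.prefix_append w z) (by simp)⟩

theorem sInf_hasPeriod_le_append {w : List α} (hw : w ≠ []) (z : List α) :
    sInf {p | HasPeriod w p} ≤ sInf {p | HasPeriod (w ++ z) p} := by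
  have hwz : w ++ z ≠ [] := by simp [hw]
  refine le_csInf ⟨_, hasPeriod_length hwz⟩ fun q hq => ?_
  rcases le_or_gt q w.length with hqw | hqw
  · exact Nat.sInf_le (hq.of_append hqw)
  · exact (Nat.sInf_le (hasPeriod_length hw)).trans hqw.le

theorem HasInternalOcc.of_prefix {u v w : List α} (hvu : v <+: u) (h : HasInternalOcc u w) :
    HasInternalOcc v w := by
  obtain ⟨t, rfl⟩ := hvu
  obtain ⟨l, r, hl, hr, rfl⟩ := h
  exact ⟨l, t ++ r, hl, by simp [hr], by simp⟩

theorem HasInternalOcc.of_append_singleton {u w : List α} {x y : α}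
    (h : HasInternalOcc (u ++ [x]) (w ++ [y])) : HasInternalOcc u w := by
  obtain ⟨l, r, hl, hr, heq⟩ := h
  obtain ⟨r', c, rfl⟩ := List.eq_nil_or_concat r |>.resolve_left hr
  have hsplit : w ++ [y] = l ++ u ++ ([x] ++ r') ++ [c] := heq.trans (by simp)
  exact ⟨l, [x] ++ r', hl, by simp, (List.append_inj' hsplit rfl).1⟩

theorem hasInternalOcc_of_suffix_of_prefix {u v w : List α} (huv : u <:+ v) (hvw : v <+: w)
    (huv_lt : u.length < v.length) (hvw_lt : v.length < w.length) : HasInternalOcc u w := by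
  obtain ⟨l, rfl⟩ := huv
  obtain ⟨r, rfl⟩ := hvw
  refine ⟨l, r, ?_, ?_, by simp⟩
  · rintro rfl; simp at huv_lt
  · rintro rfl; simp at hvw_lt

theorem sInf_hasPeriod_eq_of_isBorder {u w : List α} (hu : IsBorder u w)
    (hnio : ¬ HasInternalOcc u w) : sInf {p | HasPeriod w p} = w.length - u.length := by
  refine le_antisymm (Nat.sInf_le hu.hasPeriod_length_sub)
    (le_csInf ⟨_, hu.hasPeriod_length_sub⟩ fun q hq => ?_)
  by_contra! hlt
  obtain ⟨hne, hpre, hsuf⟩ := hq.isBorder_drop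
  have hlen : (w.drop q).length < w.length :=
    lt_of_le_of_ne hpre.length_le fun h => hne (hpre.eq_of_length h)
  have hlong : u.length < (w.drop q).length := by simp only [List.length_drop]; omega
  exact hnio (hasInternalOcc_of_suffix_of_prefix
    (List.suffix_of_suffix_length_le hu.2.2 hsuf hlong.le) hpre hlong hlen)

/-- If w is a closed nonempty word and x a letter, then wx is closed iff
wx has the same smallest period as w. -/
theorem stmt_5 {α : Type*} (w : List α) (hw : w ≠ []) (hclosed : ClosedWord w) (x : α) :
    ClosedWord (w ++ [x]) ↔
      sInf {p | HasPeriod w p} = sInf {p | HasPeriod (w ++ [x]) p} := by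
  obtain ⟨u, hu, hnio⟩ := hclosed.resolve_left hw
  have hperiod := sInf_hasPeriod_eq_of_isBorder hu hnio
  obtain ⟨hne, hpre, s, rfl⟩ := hu
  have hs : s ≠ [] := by rintro rfl; exact hne rfl
  simp only [List.length_append, Nat.add_sub_cancel] at hperiod
  constructor
  · rintro (hnil | ⟨B, hB, hBnio⟩)
    · simp at hnil
    -- `u` occurs internally in `s ++ u ++ [x]`, so the border `B` cannot be a prefix of `u`
    have huB : u.length < B.length := by
      by_contra! hle
      exact hBnio (HasInternalOcc.of_prefix
        (List.prefix_of_prefix_length_le hB.2.1 (hpre.trans (List.prefix_append _ _)) hle)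
        ⟨s, [x], hs, List.cons_ne_nil _ _, rfl⟩)
    refine le_antisymm (sInf_hasPeriod_le_append hw _) ?_
    calc sInf {p | HasPeriod (s ++ u ++ [x]) p}
        ≤ (s ++ u ++ [x]).length - B.length := Nat.sInf_le hB.hasPeriod_length_sub
      _ ≤ s.length := by simp only [List.length_append, List.length_singleton]; omega
      _ = _ := hperiod.symm
  · intro heq
    have hper : HasPeriod (s ++ u ++ [x]) s.length := by
      rw [← hperiod, heq]
      exact Nat.sInf_mem (s := {p | HasPeriod (s ++ u ++ [x]) p}) ⟨_, hasPeriod_length (by simp)⟩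
    have hdrop : (s ++ u ++ [x]).drop s.length = u ++ [x] := by simp
    exact Or.inr ⟨u ++ [x], hdrop ▸ hper.isBorder_drop,
      fun hocc => hnio hocc.of_append_singleton⟩
end

section
/- Every word of length n contains at least n + 1 distinct closed factors (counting the empty word). -/
variable {α : Type*}

/-! If `v` ends strictly before the end of `w` and is also a suffix of `w`, then the stretch of
`w` from the last earlier occurrence of `v` to the end is a complete return to `v`, hence a
closed suffix of `w` longer than `v`. So the longest closed suffix of a prefix `w.take j` does
not occur in any shorter prefix, and the longest closed suffixes of the `|w| + 1` prefixes of
`w` are pairwise distinct closed factors of `w`. -/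

open Set

lemma isFactor_of_suffix_of_prefix {u v w : List α} (huv : u <:+ v) (hvw : v <+: w) :
    IsFactor u w := by
  obtain ⟨t, rfl⟩ := huv
  obtain ⟨z, rfl⟩ := hvw
  exact ⟨t, z, rfl⟩

lemma closedFactors_finite (w : List α) : (closedFactors w).Finite := by
  refine (List.finite_toSet w.sublists).subset ?_
  rintro u ⟨⟨v, z, rfl⟩, -⟩
  exact List.mem_sublists.mpr (List.IsInfix.sublist ⟨v, z, rfl⟩)

lemma exists_closedWord_suffix_of_eq_append {v w : List α} (hv : v <:+ w) (t s : List α)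
    (hs : s ≠ []) (hw : w = t ++ v ++ s) :
    ∃ z, z <:+ w ∧ ClosedWord z ∧ v.length < z.length := by
  induction hn : s.length using Nat.strong_induction_on generalizing t s with
  | _ n ih =>
  by_cases hocc : HasInternalOcc v (v ++ s)
  · -- an internal occurrence of `v` in `v ++ s` is a later occurrence of `v` in `w`
    obtain ⟨a, b, ha, hb, hab⟩ := hocc
    have hlen : b.length < s.length := by
      have := congrArg List.length hab
      simp only [List.length_append] at this
      have := List.length_pos_iff.mpr ha
      omega
    exact ih b.length (hn ▸ hlen) (t ++ a) b hb (by simp [hw, hab]) rfl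
  · have hsuf : v ++ s <:+ w := ⟨t, by simp [hw]⟩
    have hlen : v.length < (v ++ s).length := by
      simpa using List.length_pos_iff.mpr hs
    have hborder : IsBorder v (v ++ s) :=
      ⟨fun h => by simp [← h] at hlen, List.prefix_append v s,
        List.suffix_of_suffix_length_le hv hsuf hlen.le⟩
    exact ⟨v ++ s, hsuf, Or.inr ⟨v, hborder, hocc⟩, hlen⟩

lemma exists_longest_closedWord_suffix (w : List α) :
    ∃ u, u <:+ w ∧ ClosedWord u ∧ ∀ z, z <:+ w → ClosedWord z → z.length ≤ u.length := by
  have hfin : Set.Finite {u : List α | u <:+ w ∧ ClosedWord u} :=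
    (List.finite_toSet w.tails).subset fun u hu => (List.mem_tails u w).mpr hu.1
  obtain ⟨u, ⟨hsuf, hclosed⟩, hmax⟩ :=
    exists_max_image _ List.length hfin ⟨[], List.nil_suffix, Or.inl rfl⟩
  exact ⟨u, hsuf, hclosed, fun z hz hzc => hmax z ⟨hz, hzc⟩⟩

lemma not_suffix_take_of_longest_closedWord_suffix {u w : List α} (hu : u <:+ w)
    (hmax : ∀ z, z <:+ w → ClosedWord z → z.length ≤ u.length) {k : ℕ} (hk : k < w.length) :
    ¬ u <:+ w.take k := by
  rintro ⟨t, ht⟩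
  have hw : w = t ++ u ++ w.drop k := by rw [ht, List.take_append_drop]
  have hs : w.drop k ≠ [] := by simpa using hk
  obtain ⟨z, hz, hzc, hlen⟩ := exists_closedWord_suffix_of_eq_append hu t _ hs hw
  exact absurd (hmax z hz hzc) (by omega)

/-- Every word of length n contains at least n + 1 distinct closed factors. -/
theorem stmt_6 {α : Type*} (w : List α) :
    w.length + 1 ≤ (closedFactors w).ncard := by
  choose longest hsuf hclosed hmax using fun i : ℕ => exists_longest_closedWord_suffix (w.take i)
  have hnew : ∀ i j, i < j → j ≤ w.length → ¬ longest j <:+ w.take i := fun i j hij hj => by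
    have hi : i < (w.take j).length := by simpa [hj] using hij
    simpa [List.take_take, hij.le] using
      not_suffix_take_of_longest_closedWord_suffix (hsuf j) (hmax j) hi
  have hinj : InjOn longest (Iic w.length) := fun i hi j hj heq => by
    by_contra hne
    rcases Nat.lt_or_gt_of_ne hne with hij | hji
    · exact hnew i j hij hj (heq ▸ hsuf i)
    · exact hnew j i hji hi (heq ▸ hsuf j)
  have hmem : ∀ i ∈ Iic w.length, longest i ∈ closedFactors w := fun i _ =>
    ⟨isFactor_of_suffix_of_prefix (hsuf i) (List.take_prefix i w), hclosed i⟩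
  calc w.length + 1 = (Iic w.length).ncard := by simp
    _ ≤ (closedFactors w).ncard :=
      ncard_le_ncard_of_injOn longest hmem hinj (closedFactors_finite w)
end

section
/- A word of length n contains at most n + 1 distinct palindromic factors (including the empty word). -/
variable {α : Type*}

/-!
Adding a letter `a` to the end of `w` creates at most one new palindromic factor. A new one
must be a suffix of `w ++ [a]`; if there were two, the shorter would be a proper suffix, hence
(both being palindromes) a proper prefix, of the longer, so it would already occur in `w`.
-/

namespace List

theorem isFactor_iff_isInfix {u w : List α} : IsFactor u w ↔ u <:+: w := by
  simp only [IsFactor, IsInfix, eq_comm]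

theorem IsSuffix.isPrefix_of_reverse_eq {u v : List α} (h : u <:+ v) (hu : u.reverse = u)
    (hv : v.reverse = v) : u <+: v := by
  rw [← reverse_suffix, hu, hv]
  exact h

theorem IsPrefix.isInfix_of_isSuffix_concat {u v w : List α} {a : α} (hp : u <+: v)
    (hne : u ≠ v) (hs : v <:+ w ++ [a]) : u <:+: w := by
  obtain rfl | ⟨t, rfl, ht⟩ := suffix_concat_iff.1 hs
  · exact absurd (prefix_nil.1 hp) hne
  · obtain rfl | hpt := prefix_concat_iff.1 hp
    · exact absurd rfl hne
    · exact hpt.isInfix.trans ht.isInfix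

end List

open List

theorem subsingleton_palFactors_nil : (palFactors ([] : List α)).Subsingleton := by
  rintro u ⟨hu, -⟩ v ⟨hv, -⟩
  rw [isFactor_iff_isInfix, infix_nil] at hu hv
  rw [hu, hv]

theorem isSuffix_of_mem_palFactors_concat_diff {w u : List α} {a : α}
    (hu : u ∈ palFactors (w ++ [a]) \ palFactors w) : u <:+ w ++ [a] := by
  obtain ⟨⟨hfac, hpal⟩, hnew⟩ := hu
  rw [isFactor_iff_isInfix, infix_concat_iff] at hfac
  exact hfac.resolve_right fun hw => hnew ⟨isFactor_iff_isInfix.2 hw, hpal⟩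

theorem subsingleton_palFactors_concat_diff (w : List α) (a : α) :
    (palFactors (w ++ [a]) \ palFactors w).Subsingleton := by
  intro u hu v hv
  wlog hlen : u.length ≤ v.length generalizing u v
  · exact (this hv hu (le_of_not_ge hlen)).symm
  by_contra hne
  have hsuf : u <:+ v := suffix_of_suffix_length_le
    (isSuffix_of_mem_palFactors_concat_diff hu) (isSuffix_of_mem_palFactors_concat_diff hv) hlen
  have hpre : u <+: v := hsuf.isPrefix_of_reverse_eq hu.1.2 hv.1.2
  exact hu.2 ⟨isFactor_iff_isInfix.2
    (hpre.isInfix_of_isSuffix_concat hne (isSuffix_of_mem_palFactors_concat_diff hv)), hu.1.2⟩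

-- Stated with `encard`, the induction needs no finiteness side condition (`ncard` is `0` on infinite sets).
theorem encard_palFactors_le (w : List α) : (palFactors w).encard ≤ w.length + 1 := by
  induction w using List.reverseRecOn with
  | nil => simpa using Set.encard_le_one_iff_subsingleton.2 subsingleton_palFactors_nil
  | append_singleton w a ih =>
    calc (palFactors (w ++ [a])).encard
        ≤ (palFactors (w ++ [a]) \ palFactors w).encard + (palFactors w).encard :=
          Set.encard_le_encard_sdiff_add_encard _ _
      _ ≤ 1 + (w.length + 1) :=
          add_le_add (Set.encard_le_one_iff_subsingleton.2 (subsingleton_palFactors_concat_diff w a))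
            ih
      _ = (w ++ [a]).length + 1 := by
          push_cast [length_append, length_singleton]
          ring

/-- A word of length n contains at most n + 1 distinct palindromic factors. -/
theorem stmt_9 {α : Type*} (w : List α) :
    (palFactors w).ncard ≤ w.length + 1 := by
  rw [Set.ncard_def]
  exact ENat.toNat_le_of_le_natCast (mod_cast encard_palFactors_le w)
end

section
/- If a word w contains as a factor a complete return to some word u, then for every factor u' of u, w contains as a factor a complete return to u'. -/
variable {α : Type*}

/-! A complete return to `u` is exactly the window of a word running from one occurrence of `u`
to the end of the next one. Every occurrence of `u` carries an occurrence of its factor `u'` at a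
fixed offset, so a word with two occurrences of `u` has two occurrences of `u'`, and the window
between the first two of them is a complete return to `u'`. -/

theorem Set.exists_consecutive_of_two_le_ncard {S : Set ℕ} (hS : 2 ≤ S.ncard) :
    ∃ a ∈ S, ∃ b ∈ S, a < b ∧ ∀ j ∈ S, a < j → b ≤ j := by
  have hne : S.Nonempty := Set.nonempty_of_ncard_ne_zero (by omega)
  obtain ⟨y, hyS, hya⟩ := Set.exists_ne_of_one_lt_ncard hS (sInf S)
  have hlt : sInf S < y := lt_of_le_of_ne (Nat.sInf_le hyS) hya.symm
  have hT : {j ∈ S | sInf S < j}.Nonempty := ⟨y, hyS, hlt⟩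
  obtain ⟨hbS, hab⟩ := Nat.sInf_mem hT
  exact ⟨sInf S, Nat.sInf_mem hne, _, hbS, hab, fun j hj hlt => Nat.sInf_le ⟨hj, hlt⟩⟩

namespace List

def occurrences (u w : List α) : Set ℕ := {i | i + u.length ≤ w.length ∧ u <+: w.drop i}

theorem isCompleteReturn_iff {u w : List α} :
    IsCompleteReturn u w ↔ u <+: w ∧ u <:+ w ∧ (occurrences u w).ncard = 2 := Iff.rfl

theorem occurrences_finite (u w : List α) : (occurrences u w).Finite :=
  (Set.finite_Iic w.length).subset fun _ hi => by
    simp only [Set.mem_Iic]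
    exact le_of_add_le_left hi.1

theorem add_length_mem_occurrences {u' v z r : List α} {i : ℕ}
    (hi : i ∈ occurrences (v ++ u' ++ z) r) : i + v.length ∈ occurrences u' r := by
  obtain ⟨hlen, t, ht⟩ := hi
  refine ⟨by simp only [length_append] at hlen; omega, z ++ t, ?_⟩
  rw [← drop_drop, ← ht]
  simp

theorem ncard_occurrences_le_of_isFactor {u' u : List α} (h : IsFactor u' u) (r : List α) :
    (occurrences u r).ncard ≤ (occurrences u' r).ncard := by
  obtain ⟨v, z, rfl⟩ := h
  exact Set.ncard_le_ncard_of_injOn (· + v.length) (fun _ hi => add_length_mem_occurrences hi)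
    (fun _ _ _ _ h => Nat.add_right_cancel h) (occurrences_finite u' r)

theorem mem_occurrences_take_drop {u r : List α} {a L k : ℕ} (ha : a ≤ r.length) :
    k ∈ occurrences u ((r.drop a).take L) ↔ k + u.length ≤ L ∧ a + k ∈ occurrences u r := by
  simp only [occurrences, Set.mem_ofPred_eq, drop_take, drop_drop, prefix_take_iff,
    length_take, length_drop]
  constructor
  · rintro ⟨hlen, hpre, -⟩
    exact ⟨by omega, by omega, hpre⟩
  · rintro ⟨hL, hlen, hpre⟩
    exact ⟨by omega, hpre, by omega⟩

theorem isCompleteReturn_of_occurrences_eq_pair {u w : List α} {d : ℕ} (hd : d ≠ 0)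
    (hlen : d + u.length = w.length) (h : occurrences u w = {0, d}) : IsCompleteReturn u w := by
  have h0 : 0 ∈ occurrences u w := h ▸ Set.mem_insert _ _
  have hd' : d ∈ occurrences u w := h ▸ Set.mem_insert_of_mem _ rfl
  have hsuffix : u = w.drop d := hd'.2.eq_of_length (by simp only [length_drop]; omega)
  exact isCompleteReturn_iff.mpr
    ⟨by simpa using h0.2, hsuffix ▸ drop_suffix d w, by rw [h, Set.ncard_pair hd.symm]⟩

theorem isCompleteReturn_of_consecutive {u r : List α} {a b : ℕ} (ha : a ∈ occurrences u r)
    (hb : b ∈ occurrences u r) (hab : a < b) (hnext : ∀ j ∈ occurrences u r, a < j → b ≤ j) :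
    IsCompleteReturn u ((r.drop a).take (b - a + u.length)) := by
  refine isCompleteReturn_of_occurrences_eq_pair (d := b - a) (by omega)
    (by simp only [length_take, length_drop]; have := hb.1; omega) ?_
  ext k
  simp only [mem_occurrences_take_drop (le_of_add_le_left ha.1), Set.mem_insert_iff,
    Set.mem_singleton_iff]
  constructor
  · rintro ⟨hk, hmem⟩
    rcases Nat.eq_zero_or_pos k with rfl | hpos
    · exact Or.inl rfl
    · exact Or.inr (by have := hnext _ hmem (by omega); omega)
  · rintro (rfl | rfl)
    · exact ⟨by omega, by simpa using ha⟩
    · exact ⟨le_rfl, by rwa [Nat.add_sub_cancel' hab.le]⟩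

theorem exists_isCompleteReturn_of_two_le_ncard_occurrences {u r : List α}
    (h : 2 ≤ (occurrences u r).ncard) : ∃ r', r' <:+: r ∧ IsCompleteReturn u r' := by
  obtain ⟨a, ha, b, hb, hab, hnext⟩ := Set.exists_consecutive_of_two_le_ncard h
  exact ⟨_, (take_prefix _ _).isInfix.trans (drop_suffix _ _).isInfix,
    isCompleteReturn_of_consecutive ha hb hab hnext⟩

end List

open List in
/-- If w contains a complete return to u as a factor, then for every factor u'
of u, w contains a complete return to u' as a factor. -/
theorem stmt_12 {α : Type*} (w u r : List α) (hr : IsFactor r w)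
    (hret : IsCompleteReturn u r) (u' : List α) (hu' : IsFactor u' u) :
    ∃ r' : List α, IsFactor r' w ∧ IsCompleteReturn u' r' := by
  have htwo : 2 ≤ (occurrences u' r).ncard :=
    (isCompleteReturn_iff.mp hret).2.2 ▸ ncard_occurrences_le_of_isFactor hu' r
  obtain ⟨r', hr'r, hret'⟩ := exists_isCompleteReturn_of_two_le_ncard_occurrences htwo
  exact ⟨r', isFactor_iff_isInfix.mpr (hr'r.trans (isFactor_iff_isInfix.mp hr)), hret'⟩
end

section
/- Every closed factor of a bitonic binary word is a palindrome. -/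
variable {α : Type*}

/-!
A factor of `c^i d^j c^k` again has the form `c^p d^q c^r`, and such a word with `q > 0` is
determined by its three exponents. Let `v` be a border of a closed word `c^p d^q c^r` with
`q > 0`. If `v` contained `d`, then as a suffix it would contain the whole final `c`-block,
and comparing exponents with `v` read as a prefix shows that `v` is the whole word. So
`v = c^n`, and since `c^n` has no internal occurrence, `n = p` and `n = r`.
-/

theorem hasInternalOcc_replicate_append {c : α} {n p : ℕ} (hnp : n < p) {l : List α}
    (hl : l ≠ []) : HasInternalOcc (List.replicate n c) (List.replicate p c ++ l) := by
  obtain ⟨m, rfl⟩ := Nat.exists_eq_add_of_lt hnp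
  refine ⟨[c], List.replicate m c ++ l, List.cons_ne_nil _ _, by simp [hl], ?_⟩
  rw [show n + m + 1 = 1 + n + m by omega, List.replicate_add, List.replicate_add]
  simp only [List.replicate_one, List.append_assoc]

theorem hasInternalOcc_append_replicate {c : α} {n r : ℕ} (hnr : n < r) {l : List α}
    (hl : l ≠ []) : HasInternalOcc (List.replicate n c) (l ++ List.replicate r c) := by
  obtain ⟨m, rfl⟩ := Nat.exists_eq_add_of_lt hnr
  refine ⟨l ++ List.replicate m c, [c], by simp [hl], List.cons_ne_nil _ _, ?_⟩
  rw [Nat.add_comm n, List.replicate_succ', List.replicate_add]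
  simp only [List.append_assoc]

section Bitonic

def bitonicWord (c d : α) (p q r : ℕ) : List α :=
  List.replicate p c ++ List.replicate q d ++ List.replicate r c

variable {c d : α}

theorem bitonicWord_take (p q r n : ℕ) :
    (bitonicWord c d p q r).take n =
      bitonicWord c d (min n p) (min (n - p) q) (min (n - p - q) r) := by
  simp [bitonicWord, List.take_append, List.take_replicate]

theorem bitonicWord_drop (p q r n : ℕ) :
    (bitonicWord c d p q r).drop n =
      bitonicWord c d (p - n) (q - (n - p)) (r - (n - p - q)) := by
  simp [bitonicWord, List.drop_append, List.drop_replicate]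

@[simp]
theorem length_bitonicWord (p q r : ℕ) : (bitonicWord c d p q r).length = p + q + r := by
  simp [bitonicWord, Nat.add_assoc]

theorem reverse_bitonicWord (p q r : ℕ) :
    (bitonicWord c d p q r).reverse = bitonicWord c d r q p := by
  simp [bitonicWord, List.append_assoc]

theorem bitonicWord_zero (p r : ℕ) : bitonicWord c d p 0 r = List.replicate (p + r) c := by
  simp [bitonicWord]

theorem count_bitonicWord [DecidableEq α] (hcd : c ≠ d) (p q r : ℕ) :
    (bitonicWord c d p q r).count d = q := by
  simp [bitonicWord, List.count_replicate, hcd]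

theorem idxOf_bitonicWord [DecidableEq α] (hcd : c ≠ d) (p : ℕ) {q : ℕ} (hq : 0 < q) (r : ℕ) :
    (bitonicWord c d p q r).idxOf d = p := by
  obtain ⟨q, rfl⟩ := Nat.exists_eq_add_of_lt hq
  rw [bitonicWord, List.append_assoc, List.idxOf_append_of_notMem (by simp [hcd.symm])]
  simp [List.replicate_succ]

theorem bitonicWord_inj (hcd : c ≠ d) {p q r p' q' r' : ℕ} (hq : 0 < q) (hq' : 0 < q')
    (h : bitonicWord c d p q r = bitonicWord c d p' q' r') : p = p' ∧ q = q' ∧ r = r' := by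
  classical
  have hp : p = p' := by
    rw [← idxOf_bitonicWord hcd p hq r, h, idxOf_bitonicWord hcd p' hq' r']
  subst hp
  have hq : q = q' := by simpa [count_bitonicWord hcd] using congrArg (List.count d) h
  subst hq
  have hr := congrArg List.length h
  simp only [length_bitonicWord] at hr
  exact ⟨rfl, rfl, by omega⟩

theorem IsFactor.exists_bitonicWord {u : List α} {i j k : ℕ}
    (hu : IsFactor u (bitonicWord c d i j k)) : ∃ p q r, u = bitonicWord c d p q r := by
  obtain ⟨v, z, hw⟩ := hu
  have hu : u = ((bitonicWord c d i j k).drop v.length).take u.length := by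
    simp [hw, List.append_assoc]
  rw [bitonicWord_drop, bitonicWord_take] at hu
  exact ⟨_, _, _, hu⟩

theorem ClosedWord.left_eq_right_of_bitonicWord (hcd : c ≠ d) {p q r : ℕ} (hq : 0 < q)
    (hc : ClosedWord (bitonicWord c d p q r)) : p = r := by
  classical
  obtain hnil | ⟨v, ⟨hne, hpre, hsuf⟩, hint⟩ := hc
  · simpa [hq.ne'] using congrArg List.length hnil
  set n := v.length
  have hn : n < p + q + r := by
    simpa using lt_of_le_of_ne hpre.length_le (mt hpre.eq_of_length hne)
  have htake : v = bitonicWord c d (min n p) (min (n - p) q) (min (n - p - q) r) := by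
    rw [List.prefix_iff_eq_take.mp hpre, bitonicWord_take]
  set m := p + q + r - n
  have hdrop : v = bitonicWord c d (p - m) (q - (m - p)) (r - (m - p - q)) := by
    rw [List.suffix_iff_eq_drop.mp hsuf, length_bitonicWord, bitonicWord_drop]
  have hcount : min (n - p) q = q - (m - p) := by
    simpa [count_bitonicWord hcd] using congrArg (List.count d) (htake.symm.trans hdrop)
  by_cases hd : min (n - p) q = 0
  · have hv : v = List.replicate n c := by
      rw [htake, hd, show min n p = n by omega, show n - p - q = 0 by omega]
      simp [bitonicWord]
    have hnp : ¬ n < p := fun h ↦ hint <| by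
      rw [hv, bitonicWord, List.append_assoc]
      exact hasInternalOcc_replicate_append h (by simp [hq.ne'])
    have hnr : ¬ n < r := fun h ↦ hint <| by
      rw [hv, bitonicWord]
      exact hasInternalOcc_append_replicate h (by simp [hq.ne'])
    omega
  · have := (bitonicWord_inj hcd (by omega) (by omega) (htake.symm.trans hdrop)).2.2
    omega

theorem ClosedWord.reverse_bitonicWord_eq (hcd : c ≠ d) {p q r : ℕ}
    (hc : ClosedWord (bitonicWord c d p q r)) :
    (bitonicWord c d p q r).reverse = bitonicWord c d p q r := by
  rcases Nat.eq_zero_or_pos q with rfl | hq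
  · rw [bitonicWord_zero, List.reverse_replicate]
  · rw [reverse_bitonicWord, hc.left_eq_right_of_bitonicWord hcd hq]

theorem ClosedWord.reverse_eq_of_isFactor_bitonicWord (hcd : c ≠ d) {u : List α}
    (hc : ClosedWord u) {i j k : ℕ} (hu : IsFactor u (bitonicWord c d i j k)) :
    u.reverse = u := by
  obtain ⟨p, q, r, rfl⟩ := hu.exists_bitonicWord
  exact hc.reverse_bitonicWord_eq hcd

end Bitonic

/-- Every closed factor of a bitonic binary word is a palindrome. -/
theorem stmt_17 {α : Type*} (a b : α) (hab : a ≠ b) (w : List α)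
    (hbit : ∃ i j k : ℕ,
      w = List.replicate i a ++ List.replicate j b ++ List.replicate k a ∨
      w = List.replicate i b ++ List.replicate j a ++ List.replicate k b)
    (u : List α) (hu : IsFactor u w) (hc : ClosedWord u) :
    u.reverse = u := by
  obtain ⟨i, j, k, rfl | rfl⟩ := hbit
  · exact hc.reverse_eq_of_isFactor_bitonicWord hab hu
  · exact hc.reverse_eq_of_isFactor_bitonicWord hab.symm hu
end
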